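/- Let G be the normalizer of the diagonal torus in SL₂, let p₁ be the trivial 2-dimensional representation of G and p₂ the inclusion representation G ↪ SL₂ ⊆ GL₂. Then for every element g of the non-identity connected component of G, p₁(g)⁴ = p₂(g)⁴ = I, and in particular the characteristic polynomials of p₁(g)⁴ and p₂(g)⁴ agree, while p₁ and p₂ are not potentially equivalent (their restrictions to any Zariski-dense subgroup are non-isomorphic). -/
import Mathlib


/-- The normalizer of the diagonal torus in `SL₂`: the set of matrices of determinant
one which are either diagonal or antidiagonal. -/
def torusNormalizerSL2 (k : Type*) [Field k] : Set (Matrix (Fin 2) (Fin 2) k) :=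
  {g | g.det = 1 ∧ ((g 0 1 = 0 ∧ g 1 0 = 0) ∨ (g 0 0 = 0 ∧ g 1 1 = 0))}

/-- Let `G` be the normalizer of the diagonal torus in `SL₂` over an algebraically
closed field of characteristic zero, `p₁` the trivial 2-dimensional representation of
`G` and `p₂` the inclusion `G ↪ GL₂`.  Then for every `g` in the non-identity connected
component of `G` (the antidiagonal matrices), `p₁(g)⁴ = p₂(g)⁴ = I`, and in particular
the characteristic polynomials of `p₁(g)⁴` and `p₂(g)⁴` agree; yet `p₁` and `p₂` are
not potentially equivalent: their restrictions to any Zariski-dense subset of `G` are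
non-isomorphic. -/
theorem trivial_and_inclusion_not_potentially_equivalent
    (k : Type*) [Field k] [IsAlgClosed k] [CharZero k] :
    (∀ g ∈ torusNormalizerSL2 k, g 0 0 = 0 →
      (1 : Matrix (Fin 2) (Fin 2) k) ^ 4 = 1 ∧ g ^ 4 = 1 ∧
        ((1 : Matrix (Fin 2) (Fin 2) k) ^ 4).charpoly = (g ^ 4).charpoly) ∧
    (∀ Γ : Set (Matrix (Fin 2) (Fin 2) k), Γ ⊆ torusNormalizerSL2 k →
      (∀ f : MvPolynomial (Fin 2 × Fin 2) k,
        (∀ γ ∈ Γ, MvPolynomial.eval (fun q => γ q.1 q.2) f = 0) →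
        ∀ g ∈ torusNormalizerSL2 k, MvPolynomial.eval (fun q => g q.1 q.2) f = 0) →
      ¬ ∃ P : GL (Fin 2) k, ∀ γ ∈ Γ,
        (P : Matrix (Fin 2) (Fin 2) k) * (1 : Matrix (Fin 2) (Fin 2) k) =
          γ * (P : Matrix (Fin 2) (Fin 2) k)) := by
  constructor
  · rintro g ⟨hdet, hcase⟩ h00
    have h11 : g 1 1 = 0 := by
      rcases hcase with ⟨h01, h10⟩ | ⟨_, h11⟩
      · exfalso
        rw [Matrix.det_fin_two, h00, h01] at hdet
        simp at hdet
      · exact h11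
    have hprod : g 0 1 * g 1 0 = -1 := by
      rw [Matrix.det_fin_two, h00, h11] at hdet
      linear_combination -hdet
    have hg2 : g ^ 2 = -1 := by
      rw [pow_two]
      ext i j
      fin_cases i <;> fin_cases j <;>
        simp [Matrix.mul_apply, Fin.sum_univ_two, h00, h11, Matrix.one_apply] <;>
        linear_combination hprod
    have hg4 : g ^ 4 = 1 := by
      have : g ^ 4 = (g ^ 2) ^ 2 := by rw [← pow_mul]
      rw [this, hg2]
      simp
    refine ⟨one_pow 4, hg4, ?_⟩
    rw [one_pow, hg4]
  · rintro Γ hΓ hdense ⟨P, hP⟩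
    have hΓ1 : ∀ γ ∈ Γ, γ = 1 := by
      intro γ hγ
      have h := hP γ hγ
      rw [mul_one] at h
      calc γ = γ * ((P : Matrix (Fin 2) (Fin 2) k) * ((P⁻¹ : GL (Fin 2) k) : Matrix (Fin 2) (Fin 2) k)) := by
              rw [← Units.val_mul, mul_inv_cancel]; simp
        _ = (γ * (P : Matrix (Fin 2) (Fin 2) k)) * ((P⁻¹ : GL (Fin 2) k) : Matrix (Fin 2) (Fin 2) k) := by rw [mul_assoc]
        _ = ((P : Matrix (Fin 2) (Fin 2) k)) * ((P⁻¹ : GL (Fin 2) k) : Matrix (Fin 2) (Fin 2) k) := by rw [← h]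
        _ = 1 := by rw [← Units.val_mul, mul_inv_cancel]; simp
    have key := hdense (MvPolynomial.X ((0 : Fin 2), (1 : Fin 2)))
      (by
        intro γ hγ
        rw [hΓ1 γ hγ]
        simp [Matrix.one_apply])
      !![0, 1; -1, 0]
      (by
        constructor
        · simp [Matrix.det_fin_two]
        · right; simp)
    simp at key
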